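/- For every real s > 0 and every ε > 0 there exists M > 1 such that for every measurable function F : ℝ³ → [0, ∞], ∫_{ℝ³} ∫_{ℝ³} ‖ξ‖^{s+1} F(η) F(ξ − η) dη dξ ≤ (M^{s+1} + ε) · ( ∫ ‖ξ‖⁻¹ F(ξ) dξ ) ( ∫ ‖ξ‖ F(ξ) dξ ) + 2ε · ( ∫ F(ξ) dξ ) ( ∫ ‖ξ‖^{s+2} F(ξ) dξ ), with all integrals Lebesgue integrals over ℝ³ valued in [0, ∞]. -/

import Mathlib

open MeasureTheory ENNReal

/-!
Since `‖ξ‖ ≤ ‖η‖ + ‖ξ - η‖`, the weight `‖ξ‖ ^ (s + 1)` is at most `M ^ (s + 1)` when `‖ξ‖ ≤ M`,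
and otherwise at most `‖ξ‖ ^ (s + 2) / M ≤ 2 ^ (s + 1) (‖η‖ ^ (s + 2) + ‖ξ - η‖ ^ (s + 2)) / M`,
which is below `ε (‖η‖ ^ (s + 2) + ‖ξ - η‖ ^ (s + 2))` for `M` large. Integrating this pointwise
bound against `F η F (ξ - η)` and using translation invariance of Lebesgue measure gives
`M ^ (s + 1) (∫ F) ^ 2 + 2 ε (∫ F) (∫ ‖ξ‖ ^ (s + 2) F)`. Finally Cauchy–Schwarz applied to
`F = (‖ξ‖⁻¹ F) ^ (1/2) (‖ξ‖ F) ^ (1/2)` bounds `(∫ F) ^ 2` by `(∫ ‖ξ‖⁻¹ F) (∫ ‖ξ‖ F)`.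
-/

lemma Real.rpow_add_le_mul_rpow_add_rpow {a b p : ℝ} (ha : 0 ≤ a) (hb : 0 ≤ b) (hp : 1 ≤ p) :
    (a + b) ^ p ≤ 2 ^ (p - 1) * (a ^ p + b ^ p) := by
  lift a to NNReal using ha
  lift b to NNReal using hb
  exact_mod_cast NNReal.rpow_add_le_mul_rpow_add_rpow a b hp

lemma exists_rpow_le_of_le_add {p ε : ℝ} (hp : 0 ≤ p) (hε : 0 < ε) :
    ∃ M : ℝ, 1 < M ∧ ∀ a b c : ℝ, 0 ≤ a → 0 ≤ b → 0 ≤ c → c ≤ a + b →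
      c ^ p ≤ M ^ p + ε * a ^ (p + 1) + ε * b ^ (p + 1) := by
  refine ⟨max 2 (2 ^ p / ε), one_lt_two.trans_le (le_max_left _ _), ?_⟩
  set M := max 2 (2 ^ p / ε)
  intro a b c ha hb hc hcab
  have hM : 0 < M := two_pos.trans_le (le_max_left _ _)
  have hab : 0 ≤ ε * a ^ (p + 1) + ε * b ^ (p + 1) := by positivity
  rcases le_or_gt c M with hcM | hMc
  · have := Real.rpow_le_rpow hc hcM hp
    linarith
  -- Above the threshold `M`, one factor `c > M ≥ 2 ^ p / ε` pays for the constant of convexity.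
  have hc0 : 0 < c := hM.trans hMc
  have h2p : 2 ^ p ≤ ε * M := (div_le_iff₀' hε).1 (le_max_right _ _)
  have hconv : c ^ (p + 1) ≤ 2 ^ p * (a ^ (p + 1) + b ^ (p + 1)) :=
    calc c ^ (p + 1) ≤ (a + b) ^ (p + 1) := Real.rpow_le_rpow hc hcab (by linarith)
      _ ≤ 2 ^ (p + 1 - 1) * (a ^ (p + 1) + b ^ (p + 1)) :=
        Real.rpow_add_le_mul_rpow_add_rpow ha hb (by linarith)
      _ = 2 ^ p * (a ^ (p + 1) + b ^ (p + 1)) := by rw [add_sub_cancel_right]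
  have hmain : c ^ p * M ≤ (ε * a ^ (p + 1) + ε * b ^ (p + 1)) * M :=
    calc c ^ p * M ≤ c ^ p * c := by gcongr
      _ = c ^ (p + 1) := (Real.rpow_add_one hc0.ne' p).symm
      _ ≤ 2 ^ p * (a ^ (p + 1) + b ^ (p + 1)) := hconv
      _ ≤ ε * M * (a ^ (p + 1) + b ^ (p + 1)) := by gcongr
      _ = (ε * a ^ (p + 1) + ε * b ^ (p + 1)) * M := by ring
  have := le_of_mul_le_mul_right hmain hM
  have : 0 ≤ M ^ p := by positivity
  linarith

lemma lintegral_lintegral_add_left {α β : Type*} [MeasurableSpace α] [MeasurableSpace β]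
    {μ : Measure α} {ν : Measure β} [SFinite ν] {f : α → β → ℝ≥0∞}
    (hf : Measurable (Function.uncurry f)) (g : α → β → ℝ≥0∞) :
    ∫⁻ x, ∫⁻ y, f x y + g x y ∂ν ∂μ = ∫⁻ x, ∫⁻ y, f x y ∂ν ∂μ + ∫⁻ x, ∫⁻ y, g x y ∂ν ∂μ := by
  simp_rw [fun x => lintegral_add_left (μ := ν) (hf.of_uncurry_left (x := x)) (g x)]
  exact lintegral_add_left hf.lintegral_prod_right' _

section Convolution

variable {G : Type*} [MeasurableSpace G] [AddGroup G] [MeasurableAdd₂ G] [MeasurableNeg G]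
  {μ : Measure G} [SFinite μ] [μ.IsAddRightInvariant]

lemma lintegral_lintegral_mul_sub {f g : G → ℝ≥0∞} (hf : Measurable f) (hg : Measurable g) :
    ∫⁻ x, ∫⁻ y, f y * g (x - y) ∂μ ∂μ = (∫⁻ x, f x ∂μ) * ∫⁻ x, g x ∂μ := by
  have hinner : ∀ y, ∫⁻ x, f y * g (x - y) ∂μ = f y * ∫⁻ x, g x ∂μ := fun y => by
    rw [lintegral_const_mul _ (by fun_prop : Measurable fun x => g (x - y)),
      lintegral_sub_right_eq_self g]
  rw [lintegral_lintegral_swap (by fun_prop)]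
  simp_rw [hinner]
  exact lintegral_mul_const _ hf

lemma lintegral_lintegral_add_add_mul_mul_sub (c : ℝ≥0∞) {u f : G → ℝ≥0∞}
    (hu : Measurable u) (hf : Measurable f) :
    ∫⁻ x, ∫⁻ y, (c + u y + u (x - y)) * f y * f (x - y) ∂μ ∂μ =
      c * (∫⁻ x, f x ∂μ) ^ 2 + 2 * ((∫⁻ x, f x ∂μ) * ∫⁻ x, u x * f x ∂μ) := by
  have hsplit : ∀ x y, (c + u y + u (x - y)) * f y * f (x - y) =
      c * f y * f (x - y) + u y * f y * f (x - y) + f y * (u (x - y) * f (x - y)) := by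
    intro x y; ring
  simp_rw [hsplit]
  rw [lintegral_lintegral_add_left (by fun_prop), lintegral_lintegral_add_left (by fun_prop),
    lintegral_lintegral_mul_sub (f := fun y => c * f y) (by fun_prop) hf,
    lintegral_lintegral_mul_sub (f := fun y => u y * f y) (by fun_prop) hf,
    lintegral_lintegral_mul_sub hf (g := fun y => u y * f y) (by fun_prop),
    lintegral_const_mul _ hf]
  ring

end Convolution

lemma sq_lintegral_le_lintegral_inv_mul_mul_lintegral_mul {α : Type*} [MeasurableSpace α]
    {μ : Measure α} {w f : α → ℝ≥0∞} (hw : AEMeasurable w μ) (hf : AEMeasurable f μ)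
    (hw0 : ∀ᵐ x ∂μ, w x ≠ 0) (hwtop : ∀ᵐ x ∂μ, w x ≠ ⊤) :
    (∫⁻ x, f x ∂μ) ^ 2 ≤ (∫⁻ x, (w x)⁻¹ * f x ∂μ) * ∫⁻ x, w x * f x ∂μ := by
  have hsqrt : ∀ᵐ x ∂μ, f x = ((w x)⁻¹ * f x) ^ (2⁻¹ : ℝ) * (w x * f x) ^ (2⁻¹ : ℝ) := by
    filter_upwards [hw0, hwtop] with x h0 htop
    rw [← ENNReal.mul_rpow_of_nonneg _ _ (by norm_num), mul_mul_mul_comm,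
      ENNReal.inv_mul_cancel h0 htop, one_mul, ← sq, ← ENNReal.rpow_two, ← ENNReal.rpow_mul]
    norm_num
  rw [lintegral_congr_ae hsqrt]
  calc _ ≤ ((∫⁻ x, (w x)⁻¹ * f x ∂μ) ^ (2⁻¹ : ℝ) * (∫⁻ x, w x * f x ∂μ) ^ (2⁻¹ : ℝ)) ^ 2 := by
        gcongr
        exact lintegral_mul_norm_pow_le (hw.inv.mul hf) (hw.mul hf) (by norm_num) (by norm_num)
          (by norm_num)
    _ = _ := by
      rw [← ENNReal.mul_rpow_of_nonneg _ _ (by norm_num), ← ENNReal.rpow_two, ← ENNReal.rpow_mul]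
      norm_num

/-- Weighted bilinear convolution estimate for propagation of `X^s` regularity:
for `s > 0` and `ε > 0` there is `M > 1` such that for every measurable
`F : ℝ³ → [0,∞]`,
`∬ ‖ξ‖^(s+1) F(η) F(ξ-η) dη dξ ≤ (M^(s+1) + ε)(∫ ‖ξ‖⁻¹ F)(∫ ‖ξ‖ F)
  + 2ε (∫ F)(∫ ‖ξ‖^(s+2) F)`. -/
theorem stmt_13 (s ε : ℝ) (hs : 0 < s) (hε : 0 < ε) :
    ∃ M : ℝ, 1 < M ∧ ∀ F : EuclideanSpace ℝ (Fin 3) → ℝ≥0∞, Measurable F →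
      (∫⁻ ξ, ∫⁻ η, ENNReal.ofReal (‖ξ‖ ^ (s + 1)) * F η * F (ξ - η)) ≤
        (ENNReal.ofReal (M ^ (s + 1)) + ENNReal.ofReal ε) *
          ((∫⁻ ξ, (‖ξ‖₊ : ℝ≥0∞)⁻¹ * F ξ) * (∫⁻ ξ, (‖ξ‖₊ : ℝ≥0∞) * F ξ)) +
        2 * ENNReal.ofReal ε *
          ((∫⁻ ξ, F ξ) * (∫⁻ ξ, ENNReal.ofReal (‖ξ‖ ^ (s + 2)) * F ξ)) := by
  obtain ⟨M, hM, hsplit⟩ := exists_rpow_le_of_le_add (p := s + 1) (by linarith) hε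
  refine ⟨M, hM, fun F hF => ?_⟩
  set W : EuclideanSpace ℝ (Fin 3) → ℝ≥0∞ := fun ξ =>
    ENNReal.ofReal ε * ENNReal.ofReal (‖ξ‖ ^ (s + 2))
  have hweight : ∀ ξ η, ENNReal.ofReal (‖ξ‖ ^ (s + 1)) ≤
      ENNReal.ofReal (M ^ (s + 1)) + W η + W (ξ - η) := fun ξ η => by
    have h := hsplit ‖η‖ ‖ξ - η‖ ‖ξ‖ (norm_nonneg _) (norm_nonneg _) (norm_nonneg _)
      (norm_le_norm_add_norm_sub' ξ η)
    rw [show s + 1 + 1 = s + 2 by ring] at h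
    simp only [W, ← ENNReal.ofReal_mul hε.le]
    rw [← ENNReal.ofReal_add (by positivity) (by positivity),
      ← ENNReal.ofReal_add (by positivity) (by positivity)]
    exact ENNReal.ofReal_le_ofReal h
  have hW : ∫⁻ ξ, W ξ * F ξ =
      ENNReal.ofReal ε * ∫⁻ ξ, ENNReal.ofReal (‖ξ‖ ^ (s + 2)) * F ξ := by
    simp only [W, mul_assoc]
    exact lintegral_const_mul _ (by fun_prop)
  have hCS := sq_lintegral_le_lintegral_inv_mul_mul_lintegral_mul (μ := volume)
    (w := fun ξ : EuclideanSpace ℝ (Fin 3) => (‖ξ‖₊ : ℝ≥0∞)) (by fun_prop) hF.aemeasurable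
    (by filter_upwards [Measure.ae_ne volume 0] with ξ hξ using by simpa using hξ)
    (by simp)
  calc _ ≤ ∫⁻ ξ, ∫⁻ η,
          (ENNReal.ofReal (M ^ (s + 1)) + W η + W (ξ - η)) * F η * F (ξ - η) := by
        gcongr with ξ η
        exact hweight ξ η
    _ = ENNReal.ofReal (M ^ (s + 1)) * (∫⁻ ξ, F ξ) ^ 2 +
          2 * ((∫⁻ ξ, F ξ) * ∫⁻ ξ, W ξ * F ξ) :=
        lintegral_lintegral_add_add_mul_mul_sub _ (by fun_prop) hF
    _ ≤ _ := by
        rw [hW, mul_left_comm _ (ENNReal.ofReal ε), ← mul_assoc 2]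
        gcongr
        exact le_self_add
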